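/- arXiv:2102.01481 — 2 statements merged into one kernel-verified Lean document; each statement's English description precedes it below -/
import Mathlib

section
/- Let x* be a locally optimal solution of the problem (P) and suppose H is Fréchet differentiable at x*. Then ∂h₀(x*) ⊆ ∂g₀(x*) + N_{Ω(x*)}(x*), where Ω(x*) = {x ∈ A : G(x) − H(x*) − DH(x*)(x − x*) ⪯_K 0} and N_V(x) = {v ∈ ℝ^d : ⟨v, z − x⟩ ≤ 0 for all z ∈ V} denotes the normal cone to a convex set V at x ∈ V. -/
/-!
Since `H` is `K`-convex and differentiable at `x*`, it lies `K`-above its linearization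
`H x* + DH(x*)(· - x*)`, so the convex set `Ω(x*)` is contained in the feasible set of (P) and
contains `x*`. For `v ∈ ∂h₀(x*)` the convex function `φ = g₀ - ⟪v, · - x*⟫` dominates `f₀` up to
the constant `h₀ x*` with equality at `x*`, so `x*` is a local, hence global, minimizer of `φ` on
`Ω(x*)`. Separating the strict epigraph of `φ` from `Ω(x*) × (-∞, φ x*]` gives a subgradient `p`
of `φ` at `x*` with `-p ∈ N_{Ω(x*)}(x*)`, and then `v = (v + p) + (-p)`.
-/

open scoped RealInnerProductSpace Pointwise

/-- A function with values in a space ordered by a cone `K` is `K`-convex if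
`Φ(αx₁ + (1−α)x₂) ⪯_K αΦ(x₁) + (1−α)Φ(x₂)` for all `x₁, x₂` and `α ∈ [0,1]`. -/
def KConvex {X Y : Type*} [AddCommGroup X] [Module ℝ X] [AddCommGroup Y] [Module ℝ Y]
    (K : Set Y) (Φ : X → Y) : Prop :=
  ∀ (x₁ x₂ : X) (α : ℝ), α ∈ Set.Icc (0 : ℝ) 1 →
    α • Φ x₁ + (1 - α) • Φ x₂ - Φ (α • x₁ + (1 - α) • x₂) ∈ K

/-- The subdifferential of a convex function `φ : ℝ^d → ℝ` at a point `x`. -/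
def subdiff {d : ℕ} (φ : EuclideanSpace ℝ (Fin d) → ℝ) (x : EuclideanSpace ℝ (Fin d)) :
    Set (EuclideanSpace ℝ (Fin d)) :=
  {w | ∀ y, φ x + ⟪w, y - x⟫ ≤ φ y}

open Filter Topology Set

theorem add_mem_of_convex_of_smul_mem {Y : Type*} [AddCommGroup Y] [Module ℝ Y] {K : Set Y}
    (hKconvex : Convex ℝ K) (hKcone : ∀ c : ℝ, 0 ≤ c → ∀ y ∈ K, c • y ∈ K)
    {a b : Y} (ha : a ∈ K) (hb : b ∈ K) : a + b ∈ K := by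
  convert hKcone 2 zero_le_two _ (hKconvex ha hb one_half_pos.le one_half_pos.le (add_halves 1))
    using 1
  module

namespace KConvex

section Module

variable {X Y : Type*} [AddCommGroup X] [Module ℝ X] [AddCommGroup Y] [Module ℝ Y]
  {K : Set Y} {Φ : X → Y}

theorem sub_affine {F : Type*} [FunLike F X Y] [LinearMapClass F ℝ X Y]
    (hΦ : KConvex K Φ) (c : Y) (L : F) (x₀ : X) :
    KConvex K (fun x => Φ x - c - L (x - x₀)) := by
  intro x₁ x₂ α hα
  convert hΦ x₁ x₂ α hα using 1
  simp only [map_sub, map_add, map_smul]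
  module

theorem convex_setOf_neg_mem (hΦ : KConvex K Φ) (hKconvex : Convex ℝ K)
    (hKadd : ∀ a ∈ K, ∀ b ∈ K, a + b ∈ K) : Convex ℝ {x | -Φ x ∈ K} := by
  intro x₁ hx₁ x₂ hx₂ a b ha hb hab
  obtain rfl : b = 1 - a := by linarith
  show -Φ _ ∈ K
  convert hKadd _ (hKconvex hx₁ hx₂ ha hb hab) _ (hΦ x₁ x₂ a ⟨ha, by linarith⟩) using 1
  module

end Module

variable {X Y : Type*} [NormedAddCommGroup X] [NormedSpace ℝ X] [NormedAddCommGroup Y]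
  [NormedSpace ℝ Y] {K : Set Y} {Φ : X → Y}

theorem sub_sub_fderiv_mem (hΦ : KConvex K Φ) (hKclosed : IsClosed K)
    (hKcone : ∀ c : ℝ, 0 ≤ c → ∀ y ∈ K, c • y ∈ K) {Φ' : X →L[ℝ] Y} {x₀ : X}
    (hΦ' : HasFDerivAt Φ Φ' x₀) (x : X) : Φ x - Φ x₀ - Φ' (x - x₀) ∈ K := by
  refine hKclosed.mem_of_tendsto ((hΦ'.lim_real (x - x₀)).const_sub (Φ x - Φ x₀)) ?_
  filter_upwards [eventually_ge_atTop 1] with c hc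
  have hc₀ : 0 < c := one_pos.trans_le hc
  convert hKcone c hc₀.le _ (hΦ x x₀ c⁻¹ ⟨inv_nonneg.2 hc₀.le, inv_le_one_of_one_le₀ hc⟩) using 1
  rw [show c⁻¹ • x + (1 - c⁻¹) • x₀ = x₀ + c⁻¹ • (x - x₀) by module]
  simp only [smul_sub, smul_add, smul_smul, mul_sub, mul_one, mul_inv_cancel₀ hc₀.ne', one_smul]
  module

end KConvex

theorem IsMinOn.exists_subgradient_of_convexOn {E : Type*} [NormedAddCommGroup E]
    [NormedSpace ℝ E] {φ : E → ℝ} {C : Set E} {x₀ : E} (hmin : IsMinOn φ C x₀)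
    (hφ : ConvexOn ℝ univ φ) (hφc : Continuous φ) (hC : Convex ℝ C) (hx₀ : x₀ ∈ C) :
    ∃ ℓ : StrongDual ℝ E, (∀ y, φ x₀ + ℓ (y - x₀) ≤ φ y) ∧ ∀ z ∈ C, 0 ≤ ℓ (z - x₀) := by
  set S : Set (E × ℝ) := {p | p.1 ∈ univ ∧ φ p.1 < p.2}
  have hSopen : IsOpen S := by
    simpa [S] using isOpen_lt (hφc.comp continuous_fst) continuous_snd
  have hdisj : Disjoint S (C ×ˢ Iic (φ x₀)) := by
    refine disjoint_left.2 fun ⟨y, t⟩ hS hT => ?_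
    exact (hS.2.trans_le hT.2).not_ge (hmin hT.1)
  obtain ⟨f, u, hfS, hfT⟩ :=
    geometric_hahn_banach_open hφ.convex_strict_epigraph hSopen (hC.prod (convex_Iic _)) hdisj
  set β := f (0, 1)
  have hf : ∀ y t, f (y, t) = f (y, 0) + t * β := fun y t => by
    rw [← smul_eq_mul, ← map_smul, ← map_add]; simp
  have hfsub : ∀ y, f (y - x₀, 0) = f (y, 0) - f (x₀, 0) := fun y => by
    rw [← map_sub, Prod.mk_sub_mk, sub_zero]
  have hu : u ≤ f (x₀, φ x₀) := hfT _ ⟨hx₀, self_mem_Iic⟩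
  have hβ : 0 < -β := by
    have := hfS (x₀, φ x₀ + 1) ⟨mem_univ _, lt_add_one _⟩
    rw [hf] at this hu
    linarith
  -- the graph of `φ` lies in the closure of its strict epigraph
  have hgraph : ∀ y, f (y, φ y) ≤ u := fun y =>
    le_of_tendsto
      ((f.continuous.comp (Continuous.prodMk_right y)).continuousAt.tendsto.mono_left
        nhdsWithin_le_nhds)
      (eventually_nhdsWithin_of_forall (s := Ioi (φ y)) fun t ht =>
        (hfS (y, t) ⟨mem_univ _, ht⟩).le)
  refine ⟨(-β)⁻¹ • f.comp (.inl ℝ E ℝ), fun y => ?_, fun z hz => ?_⟩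
  · have := (hgraph y).trans hu
    rw [hf, hf x₀] at this
    simp only [smul_apply, ContinuousLinearMap.comp_apply, ContinuousLinearMap.inl_apply,
      smul_eq_mul, hfsub]
    rw [← le_sub_iff_add_le', inv_mul_le_iff₀ hβ]
    linarith
  · have := (hgraph x₀).trans (hfT (z, φ x₀) ⟨hz, self_mem_Iic⟩)
    rw [hf, hf z] at this
    simp only [smul_apply, ContinuousLinearMap.comp_apply, ContinuousLinearMap.inl_apply,
      smul_eq_mul, hfsub]
    exact mul_nonneg (inv_nonneg.2 hβ.le) (by linarith)

theorem ConvexOn.sub_inner_sub {E : Type*} [NormedAddCommGroup E] [InnerProductSpace ℝ E]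
    {s : Set E} {g : E → ℝ} (hg : ConvexOn ℝ s g) (v x₀ : E) :
    ConvexOn ℝ s fun x => g x - ⟪v, x - x₀⟫ := by
  have h := ((innerₛₗ ℝ v).concaveOn hg.1).add_const (-⟪v, x₀⟫)
  have heq : ⇑(innerₛₗ ℝ v) + (fun _ => -⟪v, x₀⟫) = fun x => ⟪v, x - x₀⟫ := by
    ext x
    simp [inner_sub_right, ← sub_eq_add_neg]
  exact hg.sub (heq ▸ h)

theorem IsLocalMinOn.sub_inner_of_mem_subdiff {d : ℕ} {g h : EuclideanSpace ℝ (Fin d) → ℝ}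
    {S : Set (EuclideanSpace ℝ (Fin d))} {x₀ v : EuclideanSpace ℝ (Fin d)}
    (hloc : IsLocalMinOn (g - h) S x₀) (hv : v ∈ subdiff h x₀) :
    IsLocalMinOn (fun x => g x - ⟪v, x - x₀⟫) S x₀ := by
  filter_upwards [hloc] with x hx
  have := hv x
  simp only [Pi.sub_apply] at hx
  rw [sub_self, inner_zero_right]
  linarith

theorem stmt_11_general {d : ℕ} {Y : Type*}
    [NormedAddCommGroup Y] [NormedSpace ℝ Y]
    (K : Set Y) (hKclosed : IsClosed K) (hKconvex : Convex ℝ K)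
    (hKcone : ∀ c : ℝ, 0 ≤ c → ∀ y ∈ K, c • y ∈ K)
    (g₀ h₀ : EuclideanSpace ℝ (Fin d) → ℝ)
    (hg₀ : ConvexOn ℝ Set.univ g₀)
    (G H : EuclideanSpace ℝ (Fin d) → Y)
    (hG : KConvex K G) (hH : KConvex K H)
    (A : Set (EuclideanSpace ℝ (Fin d))) (hAconvex : Convex ℝ A)
    (xs : EuclideanSpace ℝ (Fin d))
    (DH : EuclideanSpace ℝ (Fin d) →L[ℝ] Y) (hDH : HasFDerivAt H DH xs)
    (hxsfeas : xs ∈ A ∧ -(G xs - H xs) ∈ K)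
    (hlocopt : ∃ U ∈ nhds xs, ∀ x ∈ U, x ∈ A → -(G x - H x) ∈ K →
      g₀ xs - h₀ xs ≤ g₀ x - h₀ x) :
    subdiff h₀ xs ⊆ subdiff g₀ xs +
      {w : EuclideanSpace ℝ (Fin d) |
        ∀ z ∈ {x | x ∈ A ∧ -(G x - H xs - DH (x - xs)) ∈ K}, ⟪w, z - xs⟫ ≤ 0} := by
  intro v hv
  set Ω := {x | x ∈ A ∧ -(G x - H xs - DH (x - xs)) ∈ K}
  have hKadd : ∀ a ∈ K, ∀ b ∈ K, a + b ∈ K := fun a ha b hb =>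
    add_mem_of_convex_of_smul_mem hKconvex hKcone ha hb
  have hΩ : Convex ℝ Ω :=
    hAconvex.inter ((hG.sub_affine (H xs) DH xs).convex_setOf_neg_mem hKconvex hKadd)
  have hxsΩ : xs ∈ Ω := ⟨hxsfeas.1, by simpa using hxsfeas.2⟩
  have hΩfeas : Ω ⊆ {x | x ∈ A ∧ -(G x - H x) ∈ K} := fun x hx =>
    ⟨hx.1, by convert hKadd _ hx.2 _ (hH.sub_sub_fderiv_mem hKclosed hKcone hDH x) using 1; abel⟩
  have hloc : IsLocalMinOn (g₀ - h₀) {x | x ∈ A ∧ -(G x - H x) ∈ K} xs := by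
    obtain ⟨U, hU, hopt⟩ := hlocopt
    filter_upwards [mem_nhdsWithin_of_mem_nhds hU, self_mem_nhdsWithin] with x hxU hx
    exact hopt x hxU hx.1 hx.2
  have hφ := hg₀.sub_inner_sub v xs
  have hg₀c : Continuous g₀ := continuousOn_univ.1 (hg₀.continuousOn isOpen_univ)
  have hmin := IsMinOn.of_isLocalMinOn_of_convexOn hxsΩ
    ((hloc.sub_inner_of_mem_subdiff hv).on_subset hΩfeas) (hφ.subset (subset_univ _) hΩ)
  obtain ⟨ℓ, hsub, hnormal⟩ := hmin.exists_subgradient_of_convexOn hφ (by fun_prop) hΩ hxsΩ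
  set p := (InnerProductSpace.toDual ℝ _).symm ℓ
  refine ⟨v + p, fun y => ?_, -p, fun z hz => ?_, add_neg_cancel_right v p⟩
  · have := hsub y
    simp only [p, sub_self, inner_zero_right, inner_add_left,
      InnerProductSpace.toDual_symm_apply] at this ⊢
    linarith
  · simpa [p, InnerProductSpace.toDual_symm_apply] using hnormal z hz

theorem stmt_11 {d : ℕ} {Y : Type*}
    [NormedAddCommGroup Y] [NormedSpace ℝ Y] [CompleteSpace Y]
    (K : Set Y) (hKclosed : IsClosed K) (hKconvex : Convex ℝ K)
    (hKcone : ∀ c : ℝ, 0 ≤ c → ∀ y ∈ K, c • y ∈ K)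
    (hKpointed : K ∩ (-K) = {0})
    (g₀ h₀ : EuclideanSpace ℝ (Fin d) → ℝ)
    (hg₀ : ConvexOn ℝ Set.univ g₀) (hh₀ : ConvexOn ℝ Set.univ h₀)
    (G H : EuclideanSpace ℝ (Fin d) → Y)
    (hG : KConvex K G) (hH : KConvex K H)
    (A : Set (EuclideanSpace ℝ (Fin d))) (hAclosed : IsClosed A) (hAconvex : Convex ℝ A)
    (xs : EuclideanSpace ℝ (Fin d))
    (DH : EuclideanSpace ℝ (Fin d) →L[ℝ] Y) (hDH : HasFDerivAt H DH xs)
    (hxsfeas : xs ∈ A ∧ -(G xs - H xs) ∈ K)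
    (hlocopt : ∃ U ∈ nhds xs, ∀ x ∈ U, x ∈ A → -(G x - H x) ∈ K →
      g₀ xs - h₀ xs ≤ g₀ x - h₀ x) :
    subdiff h₀ xs ⊆ subdiff g₀ xs +
      {w : EuclideanSpace ℝ (Fin d) |
        ∀ z ∈ {x | x ∈ A ∧ -(G x - H xs - DH (x - xs)) ∈ K}, ⟪w, z - xs⟫ ≤ 0} :=
  stmt_11_general K hKclosed hKconvex hKcone g₀ h₀ hg₀ G H hG hH A hAconvex xs DH hDH hxsfeas
    hlocopt
end

section
/- Let H be Gâteaux differentiable on ℝ^d, let h₀ be strongly convex with constant μ > 0 (i.e. x ↦ h₀(x) − (μ/2)|x|² is convex), and let a sequence {x_n} be generated by the convex-concave procedure for problem (P): x₀ is feasible for (P), and for each n, v_n ∈ ∂h₀(x_n) and x_{n+1} is a globally optimal solution of the convex problem: minimize g₀(x) − ⟨v_n, x − x_n⟩ subject to G(x) − H(x_n) − DH(x_n)(x − x_n) ⪯_K 0 and x ∈ A. Then f₀(x_{n+1}) ≤ f₀(x_n) − (μ/2)|x_{n+1} − x_n|² for all n. -/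
open scoped RealInnerProductSpace Pointwise

/-!
A `K`-convex `H` lies `K`-above its linearization at every point (the difference quotients
`t⁻¹ (H (p + t u) - H p)` are `K`-below the chord `H (p + u) - H p` and converge to `DH p u`,
and `K` is closed). Hence every point satisfying the linearized constraint at `x n` is feasible
for (P), so all iterates are feasible, and `x n` itself is admissible for the `n`-th subproblem,
giving `g₀ (x (n+1)) - ⟪v n, x (n+1) - x n⟫ ≤ g₀ (x n)`. Strong convexity of `h₀` improves the
subgradient inequality at `x n` by `μ / 2 * ‖x (n+1) - x n‖ ^ 2`; adding the two gives the descent.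
-/

open Filter Topology

theorem Convex.add_mem_of_smul_mem {E : Type*} [AddCommGroup E] [Module ℝ E] {K : Set E}
    (hconv : Convex ℝ K) (hsmul : ∀ c : ℝ, 0 ≤ c → ∀ y ∈ K, c • y ∈ K) {a b : E}
    (ha : a ∈ K) (hb : b ∈ K) : a + b ∈ K := by
  have hmid := hconv ha hb (by norm_num : (0 : ℝ) ≤ 1 / 2) (by norm_num : (0 : ℝ) ≤ 1 / 2)
    (by norm_num)
  convert hsmul 2 zero_le_two _ hmid using 1
  module

theorem KConvex.sub_sub_mem_of_tendsto {X Y : Type*} [AddCommGroup X] [Module ℝ X]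
    [AddCommGroup Y] [Module ℝ Y] [TopologicalSpace Y] [ContinuousSub Y] {K : Set Y}
    (hKclosed : IsClosed K) (hKsmul : ∀ c : ℝ, 0 ≤ c → ∀ y ∈ K, c • y ∈ K)
    {Φ : X → Y} (hΦ : KConvex K Φ) {p u : X} {D : Y}
    (hD : Tendsto (fun t : ℝ => t⁻¹ • (Φ (p + t • u) - Φ p)) (𝓝[>] 0) (𝓝 D)) :
    Φ (p + u) - Φ p - D ∈ K := by
  have hquot : ∀ t ∈ Set.Ioo (0 : ℝ) 1, Φ (p + u) - Φ p - t⁻¹ • (Φ (p + t • u) - Φ p) ∈ K := by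
    intro t ⟨ht0, ht1⟩
    have hchord := hΦ (p + u) p t ⟨ht0.le, ht1.le⟩
    rw [show t • (p + u) + (1 - t) • p = p + t • u by module] at hchord
    convert hKsmul t⁻¹ (inv_nonneg.2 ht0.le) _ hchord using 1
    match_scalars <;> field_simp; ring
  exact hKclosed.mem_of_tendsto (tendsto_const_nhds.sub hD)
    (eventually_of_mem (Ioo_mem_nhdsGT one_pos) hquot)

theorem StrongConvexOn.add_inner_add_le {E : Type*} [NormedAddCommGroup E]
    [InnerProductSpace ℝ E] {f : E → ℝ} {m : ℝ} (hf : StrongConvexOn Set.univ m f)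
    {x v : E} (hv : ∀ y, f x + ⟪v, y - x⟫ ≤ f y) (y : E) :
    f x + ⟪v, y - x⟫ + m / 2 * ‖y - x‖ ^ 2 ≤ f y := by
  have hchord : ∀ t ∈ Set.Ioo (0 : ℝ) 1,
      f x + ⟪v, y - x⟫ + (1 - t) * (m / 2 * ‖y - x‖ ^ 2) ≤ f y := by
    intro t ⟨ht0, ht1⟩
    have hconv := hf.2 (Set.mem_univ y) (Set.mem_univ x) ht0.le (sub_nonneg.2 ht1.le)
      (add_sub_cancel t 1)
    have hsub := hv (t • y + (1 - t) • x)
    rw [show t • y + (1 - t) • x - x = t • (y - x) by module, real_inner_smul_right] at hsub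
    simp only [smul_eq_mul] at hconv
    refine le_of_mul_le_mul_left ?_ ht0
    linear_combination hsub + hconv
  have hlim : Tendsto (fun t : ℝ => f x + ⟪v, y - x⟫ + (1 - t) * (m / 2 * ‖y - x‖ ^ 2))
      (𝓝[>] 0) (𝓝 (f x + ⟪v, y - x⟫ + m / 2 * ‖y - x‖ ^ 2)) := by
    have hcont : Continuous fun t : ℝ => f x + ⟪v, y - x⟫ + (1 - t) * (m / 2 * ‖y - x‖ ^ 2) := by
      fun_prop
    simpa using (hcont.tendsto 0).mono_left nhdsWithin_le_nhds
  exact le_of_tendsto hlim (eventually_of_mem (Ioo_mem_nhdsGT one_pos) hchord)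

theorem stmt_14_general {d : ℕ} {Y : Type*}
    [NormedAddCommGroup Y] [NormedSpace ℝ Y]
    (K : Set Y) (hKclosed : IsClosed K) (hKconvex : Convex ℝ K)
    (hKcone : ∀ c : ℝ, 0 ≤ c → ∀ y ∈ K, c • y ∈ K)
    (g₀ h₀ : EuclideanSpace ℝ (Fin d) → ℝ)
    -- h₀ is strongly convex with constant μ > 0
    (μ : ℝ)
    (hstrong : ConvexOn ℝ Set.univ fun x : EuclideanSpace ℝ (Fin d) =>
      h₀ x - μ / 2 * ‖x‖ ^ 2)
    (G H : EuclideanSpace ℝ (Fin d) → Y)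
    (hH : KConvex K H)
    (A : Set (EuclideanSpace ℝ (Fin d)))
    -- H is Gâteaux differentiable on ℝ^d with derivative DH
    (DH : EuclideanSpace ℝ (Fin d) → EuclideanSpace ℝ (Fin d) →L[ℝ] Y)
    (hGateaux : ∀ p u, Filter.Tendsto (fun t : ℝ => t⁻¹ • (H (p + t • u) - H p))
      (nhdsWithin 0 {(0 : ℝ)}ᶜ) (nhds (DH p u)))
    -- the sequence generated by the convex-concave procedure
    (x : ℕ → EuclideanSpace ℝ (Fin d)) (v : ℕ → EuclideanSpace ℝ (Fin d))
    (hx0 : x 0 ∈ A ∧ -(G (x 0) - H (x 0)) ∈ K)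
    (hv : ∀ n, v n ∈ subdiff h₀ (x n))
    (hsol : ∀ n, (x (n + 1) ∈ A ∧
        -(G (x (n + 1)) - H (x n) - DH (x n) (x (n + 1) - x n)) ∈ K) ∧
      ∀ y, y ∈ A → -(G y - H (x n) - DH (x n) (y - x n)) ∈ K →
        g₀ (x (n + 1)) - ⟪v n, x (n + 1) - x n⟫ ≤ g₀ y - ⟪v n, y - x n⟫) :
    ∀ n, g₀ (x (n + 1)) - h₀ (x (n + 1)) ≤
      g₀ (x n) - h₀ (x n) - μ / 2 * ‖x (n + 1) - x n‖ ^ 2 := by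
  have hlin : ∀ p u, H (p + u) - H p - DH p u ∈ K := fun p u =>
    hH.sub_sub_mem_of_tendsto hKclosed hKcone
      ((hGateaux p u).mono_left (nhdsWithin_mono 0 fun _ ht => ne_of_gt ht))
  have hfeas : ∀ n, x n ∈ A ∧ -(G (x n) - H (x n)) ∈ K := by
    rintro (_ | n)
    · exact hx0
    obtain ⟨⟨hA, hK⟩, -⟩ := hsol n
    have hHn := hlin (x n) (x (n + 1) - x n)
    rw [add_sub_cancel] at hHn
    refine ⟨hA, ?_⟩
    convert hKconvex.add_mem_of_smul_mem hKcone hK hHn using 1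
    abel
  intro n
  have hopt := (hsol n).2 (x n) (hfeas n).1 (by simpa using (hfeas n).2)
  have hh₀ := (strongConvexOn_iff_convex.2 hstrong).add_inner_add_le (hv n) (x (n + 1))
  simp only [sub_self, inner_zero_right, sub_zero] at hopt
  linarith

theorem stmt_14 {d : ℕ} {Y : Type*}
    [NormedAddCommGroup Y] [NormedSpace ℝ Y] [CompleteSpace Y]
    (K : Set Y) (hKclosed : IsClosed K) (hKconvex : Convex ℝ K)
    (hKcone : ∀ c : ℝ, 0 ≤ c → ∀ y ∈ K, c • y ∈ K)
    (hKpointed : K ∩ (-K) = {0})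
    (g₀ h₀ : EuclideanSpace ℝ (Fin d) → ℝ)
    (hg₀ : ConvexOn ℝ Set.univ g₀) (hh₀ : ConvexOn ℝ Set.univ h₀)
    -- h₀ is strongly convex with constant μ > 0
    (μ : ℝ) (hμ : 0 < μ)
    (hstrong : ConvexOn ℝ Set.univ fun x : EuclideanSpace ℝ (Fin d) =>
      h₀ x - μ / 2 * ‖x‖ ^ 2)
    (G H : EuclideanSpace ℝ (Fin d) → Y)
    (hG : KConvex K G) (hH : KConvex K H)
    (A : Set (EuclideanSpace ℝ (Fin d))) (hAclosed : IsClosed A) (hAconvex : Convex ℝ A)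
    -- H is Gâteaux differentiable on ℝ^d with derivative DH
    (DH : EuclideanSpace ℝ (Fin d) → EuclideanSpace ℝ (Fin d) →L[ℝ] Y)
    (hGateaux : ∀ p u, Filter.Tendsto (fun t : ℝ => t⁻¹ • (H (p + t • u) - H p))
      (nhdsWithin 0 {(0 : ℝ)}ᶜ) (nhds (DH p u)))
    -- the sequence generated by the convex-concave procedure
    (x : ℕ → EuclideanSpace ℝ (Fin d)) (v : ℕ → EuclideanSpace ℝ (Fin d))
    (hx0 : x 0 ∈ A ∧ -(G (x 0) - H (x 0)) ∈ K)
    (hv : ∀ n, v n ∈ subdiff h₀ (x n))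
    (hsol : ∀ n, (x (n + 1) ∈ A ∧
        -(G (x (n + 1)) - H (x n) - DH (x n) (x (n + 1) - x n)) ∈ K) ∧
      ∀ y, y ∈ A → -(G y - H (x n) - DH (x n) (y - x n)) ∈ K →
        g₀ (x (n + 1)) - ⟪v n, x (n + 1) - x n⟫ ≤ g₀ y - ⟪v n, y - x n⟫) :
    ∀ n, g₀ (x (n + 1)) - h₀ (x (n + 1)) ≤
      g₀ (x n) - h₀ (x n) - μ / 2 * ‖x (n + 1) - x n‖ ^ 2 :=
  stmt_14_general K hKclosed hKconvex hKcone g₀ h₀ μ hstrong G H hH A DH hGateaux x v hx0 hv hsol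
end
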